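/- Let N = {1, ..., n} with n ≥ 2, let Γ be the directed cycle on N with edge set {(i, i+1) : i = 1, ..., n-1} ∪ {(n, 1)}, let f : ℤ_{≥0} → ℝ with f(0) = 0, and define the TU-game v_f : 2^N → ℝ by v_f(S) = f(|S|). Then the Shapley value of the digraph game (v_f, Γ) assigns to every player i ∈ N the amount f(n)/n, i.e., Sh(v_f, Γ) = (f(n)/n, f(n)/n, ..., f(n)/n). -/

import Mathlib

/-- Edge relation of the directed cycle `(1, 2, ..., n, 1)` on `Fin n`:
there is a directed edge from `i` to `i + 1` (mod `n`). -/
def cycleEdge (n : ℕ) [NeZero n] (i j : Fin n) : Prop := j = i + 1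

/-- `j` is a successor of `i` in the restriction of the cycle digraph to the
coalition `S`, i.e. there is a directed path from `i` to `j` using only
players of `S`. -/
def isSuccessorIn (n : ℕ) [NeZero n] (S : Set (Fin n)) (i j : Fin n) : Prop :=
  Relation.TransGen (fun a b => a ∈ S ∧ b ∈ S ∧ cycleEdge n a b) i j

/-- `i` dominates `j` in the restriction of the cycle digraph to `S`:
`j` is a successor of `i` but `i` is not a successor of `j`. -/
def dominatesIn (n : ℕ) [NeZero n] (S : Set (Fin n)) (i j : Fin n) : Prop :=
  isSuccessorIn n S i j ∧ ¬ isSuccessorIn n S j i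

/-- `P̄_π(i)`: the set of players whose position under `π` is at most that of `i`
(including `i` itself). -/
def Pbar {n : ℕ} (π : Equiv.Perm (Fin n)) (i : Fin n) : Set (Fin n) := {j | π j ≤ π i}

/-- `P_π(i)`: the set of players whose position under `π` is strictly less than
that of `i`. -/
def Pset {n : ℕ} (π : Equiv.Perm (Fin n)) (i : Fin n) : Set (Fin n) := {j | π j < π i}

/-- A permutation `π` is consistent with the directed cycle on `Fin n` if for
every player `i`, no player `j ∈ P̄_π(i)` dominates `i` in the restriction of
the cycle digraph to `P̄_π(i)`. -/
def consistent (n : ℕ) [NeZero n] (π : Equiv.Perm (Fin n)) : Prop :=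
  ∀ i : Fin n, ∀ j ∈ Pbar π i, ¬ dominatesIn n (Pbar π i) j i

/-! In the directed cycle a player is reached from its predecessor through any coalition
containing both, whereas the way back around the cycle exists only in the grand coalition.
So in a consistent order every player except the last one comes before its predecessor,
which forces the order to run backwards around the cycle from its first player `a`:
the consistent orders are the `n` maps `k ↦ a - k` (player ↦ position). Over these orders
each player occupies every position exactly once, so its average marginal contribution
`f (p + 1) - f p` telescopes to `(f n - f 0) / n`. -/

open scoped Fin.NatCast Fin.CommRing

namespace Fin

variable {n : ℕ} [NeZero n]

theorem val_neg_one_of_neZero : ((-1 : Fin n) : ℕ) = n - 1 := by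
  obtain ⟨m, rfl⟩ := Nat.exists_eq_succ_of_ne_zero (NeZero.ne n)
  simp

theorem le_neg_one (x : Fin n) : x ≤ -1 := by
  have := val_neg_one_of_neZero (n := n)
  fin_omega

theorem lt_add_one_of_ne_neg_one {x : Fin n} (hx : x ≠ -1) : x < x + 1 := by
  have := val_neg_one_of_neZero (n := n)
  exact lt_add_one_of_succ_lt (by fin_omega)

theorem strictMono_of_lt_add_one {α : Type*} [Preorder α] {g : Fin n → α}
    (hg : ∀ k, k ≠ -1 → g k < g (k + 1)) : StrictMono g := by
  obtain ⟨m, rfl⟩ := Nat.exists_eq_succ_of_ne_zero (NeZero.ne n)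
  refine strictMono_iff_lt_succ.2 fun k => ?_
  rw [← coeSucc_eq_succ]
  exact hg _ (by simp [Fin.ext_iff, k.isLt.ne])

end Fin

section Reachability

variable {n : ℕ} [NeZero n] {S : Set (Fin n)} {i j : Fin n}

theorem isSuccessorIn_iff :
    isSuccessorIn n S i j ↔ ∃ t : ℕ, 1 ≤ t ∧ j = i + t ∧ ∀ s ≤ t, i + (s : Fin n) ∈ S := by
  constructor
  · intro h
    induction h with
    | single hij =>
      obtain ⟨hi, hj, rfl⟩ := hij
      refine ⟨1, le_rfl, by simp, fun s hs => ?_⟩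
      interval_cases s <;> simpa
    | tail _ hbc ih =>
      obtain ⟨t, -, rfl, hS⟩ := ih
      obtain ⟨-, hc, rfl⟩ := hbc
      refine ⟨t + 1, by omega, by push_cast; ring, fun s hs => ?_⟩
      rcases Nat.lt_or_eq_of_le hs with hs | rfl
      · exact hS s (by omega)
      · simpa [add_assoc] using hc
  · rintro ⟨t, ht, rfl, hS⟩
    obtain ⟨t, rfl⟩ := Nat.exists_eq_add_of_le' ht
    induction t with
    | zero => exact .single ⟨by simpa using hS 0, by simpa using hS 1, by simp [cycleEdge]⟩
    | succ t ih =>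
      refine .tail (ih (by omega) fun s hs => hS s (by omega)) ⟨hS _ (by omega), hS _ le_rfl, ?_⟩
      simp only [cycleEdge]
      push_cast
      ring

theorem isSuccessorIn_univ (i j : Fin n) : isSuccessorIn n Set.univ i j :=
  isSuccessorIn_iff.2 ⟨((j - i : Fin n) : ℕ) + n, by omega, by simp, fun _ _ => trivial⟩

theorem not_isSuccessorIn_of_sub_one_notMem (h : j - 1 ∉ S) : ¬ isSuccessorIn n S i j := by
  rw [isSuccessorIn, Relation.TransGen.tail'_iff]
  rintro ⟨b, -, hbS, -, rfl⟩
  exact h (by simpa using hbS)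

theorem eq_univ_of_isSuccessorIn_sub_one (h : isSuccessorIn n S i (i - 1)) : S = Set.univ := by
  obtain ⟨t, -, ht, hS⟩ := isSuccessorIn_iff.1 h
  have hdvd : n ∣ t + 1 := by
    rw [← CharP.cast_eq_zero_iff (Fin n) n, Nat.cast_succ]
    linear_combination -ht
  have htn : n ≤ t + 1 := Nat.le_of_dvd (Nat.succ_pos t) hdvd
  refine Set.eq_univ_of_forall fun x => ?_
  simpa using hS (x - i : Fin n) (by omega)

end Reachability

section Consistency

variable {n : ℕ} [NeZero n] {π : Equiv.Perm (Fin n)}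

theorem Pbar_eq_univ_iff {i : Fin n} : Pbar π i = Set.univ ↔ π i = -1 := by
  constructor
  · intro h
    have hlast : π.symm (-1) ∈ Pbar π i := h ▸ Set.mem_univ _
    exact le_antisymm (Fin.le_neg_one _) (by simpa [Pbar] using hlast)
  · intro h
    exact Set.eq_univ_of_forall fun j => show π j ≤ π i from h ▸ Fin.le_neg_one _

theorem consistent_iff : consistent n π ↔ ∀ i, π i ≠ -1 → π i < π (i - 1) := by
  constructor
  · intro hc i hi
    by_contra! hle
    have hedge : isSuccessorIn n (Pbar π i) (i - 1) i :=
      .single ⟨hle, by simp [Pbar], by simp [cycleEdge]⟩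
    refine hc i (i - 1) hle ⟨hedge, fun hsucc => hi ?_⟩
    exact Pbar_eq_univ_iff.1 (eq_univ_of_isSuccessorIn_sub_one hsucc)
  · intro h i j _ hdom
    by_cases hi : π i = -1
    · exact hdom.2 (Pbar_eq_univ_iff.2 hi ▸ isSuccessorIn_univ i j)
    · have hpred : i - 1 ∉ Pbar π i := not_le.2 (h i hi)
      exact not_isSuccessorIn_of_sub_one_notMem hpred hdom.1

theorem eq_subLeft_of_consistent (hc : consistent n π) : π = Equiv.subLeft (π.symm 0) := by
  rw [consistent_iff] at hc
  set a := π.symm 0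
  have ha : π a = 0 := π.apply_symm_apply 0
  have hlast : π (a + 1) = -1 := by
    by_contra h
    simpa [ha] using hc (a + 1) h
  have hmono : StrictMono fun k => π (a - k) := Fin.strictMono_of_lt_add_one fun k hk => by
    have hne : π (a - k) ≠ -1 := by
      rw [← hlast, π.injective.ne_iff]
      exact fun h => hk (by linear_combination -h)
    simpa [sub_add_eq_sub_sub] using hc _ hne
  refine Equiv.ext fun j => ?_
  simpa using hmono.apply_eq (x := a - j)

theorem consistent_subLeft (a : Fin n) : consistent n (Equiv.subLeft a) := by
  refine consistent_iff.2 fun i hi => ?_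
  simp only [Equiv.subLeft_apply] at hi ⊢
  rw [show a - (i - 1) = a - i + 1 by ring]
  exact Fin.lt_add_one_of_ne_neg_one hi

theorem setOf_consistent :
    {π : Equiv.Perm (Fin n) | consistent n π} = Set.range Equiv.subLeft := by
  ext π
  refine ⟨fun hc => ⟨_, (eq_subLeft_of_consistent hc).symm⟩, ?_⟩
  rintro ⟨a, rfl⟩
  exact consistent_subLeft a

end Consistency

theorem ncard_Pbar {n : ℕ} (π : Equiv.Perm (Fin n)) (i : Fin n) :
    (Pbar π i).ncard = π i + 1 := by
  rw [show Pbar π i = π ⁻¹' Set.Iic (π i) from rfl,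
    Set.ncard_preimage_of_injective_subset_range π.injective (by simp), ← Finset.coe_Iic,
    Set.ncard_coe_finset, Fin.card_Iic]

theorem ncard_Pset {n : ℕ} (π : Equiv.Perm (Fin n)) (i : Fin n) : (Pset π i).ncard = π i := by
  rw [show Pset π i = π ⁻¹' Set.Iio (π i) from rfl,
    Set.ncard_preimage_of_injective_subset_range π.injective (by simp), ← Finset.coe_Iio,
    Set.ncard_coe_finset, Fin.card_Iio]

theorem Equiv.subLeft_injective {G : Type*} [AddGroup G] :
    Function.Injective (Equiv.subLeft : G → Equiv.Perm G) :=
  fun a b h => by simpa using Equiv.congr_fun h 0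

section Counting

variable {n : ℕ} [NeZero n]

theorem ncard_setOf_consistent : {π : Equiv.Perm (Fin n) | consistent n π}.ncard = n := by
  rw [setOf_consistent, Set.ncard_range_of_injective Equiv.subLeft_injective,
    Nat.card_eq_fintype_card, Fintype.card_fin]

theorem sum_consistent {M : Type*} [AddCommMonoid M] (g : Equiv.Perm (Fin n) → M) :
    ∑ π ∈ (Set.toFinite {π : Equiv.Perm (Fin n) | consistent n π}).toFinset, g π
      = ∑ a, g (Equiv.subLeft a) := by
  have hfin : (Set.toFinite {π : Equiv.Perm (Fin n) | consistent n π}).toFinset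
      = Finset.univ.image Equiv.subLeft := by
    ext π
    simp [setOf_consistent]
  rw [hfin, Finset.sum_image fun a _ b _ h => Equiv.subLeft_injective h]

end Counting

theorem cycle_shapley_value_general (n : ℕ) [NeZero n]
    (f : ℕ → ℝ) (hf : f 0 = 0) (i : Fin n) :
    (1 / (Set.ncard {π : Equiv.Perm (Fin n) | consistent n π} : ℝ)) *
        ∑ π ∈ (Set.toFinite {π : Equiv.Perm (Fin n) | consistent n π}).toFinset,
          (f (Pbar π i).ncard - f (Pset π i).ncard)
      = f n / n := by
  rw [ncard_setOf_consistent, sum_consistent]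
  simp only [ncard_Pbar, ncard_Pset, Equiv.subLeft_apply]
  rw [Fintype.sum_equiv (Equiv.subRight i) (fun a => f ((a - i : Fin n) + 1) - f (a - i : Fin n))
    (fun b => f (b + 1) - f b) fun _ => rfl]
  rw [Fin.sum_univ_eq_sum_range (fun k => f (k + 1) - f k), Finset.sum_range_sub, hf, sub_zero,
    one_div_mul_eq_div]

/-- The Shapley value of the digraph game `(v_f, Γ)`, where `Γ` is the directed
`n`-cycle and `v_f(S) = f(|S|)` with `f(0) = 0`, assigns to every player `i`
the amount `f(n) / n`. -/
theorem cycle_shapley_value (n : ℕ) [NeZero n] (hn : 2 ≤ n)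
    (f : ℕ → ℝ) (hf : f 0 = 0) (i : Fin n) :
    (1 / (Set.ncard {π : Equiv.Perm (Fin n) | consistent n π} : ℝ)) *
        ∑ π ∈ (Set.toFinite {π : Equiv.Perm (Fin n) | consistent n π}).toFinset,
          (f (Pbar π i).ncard - f (Pset π i).ncard)
      = f n / n :=
  cycle_shapley_value_general n f hf i
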